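/- Let S be a finite nonempty type of loco-states equipped with a neighbor relation, a positive length l and a nonnegative cost MIL on neighboring pairs, and for x, y ∈ S let ml(x, y) ∈ ℝ≥0∞ denote the infimum of total length over all walks from x to y. Fix s, t ∈ S and a budget C ≥ 0, and suppose there exists a feasible walk from s to t (total cost at most C) of total length L̃. If a loco-state st satisfies ml(s, st) + ml(st, t) > L̃, then every walk from s to t that visits st has total length strictly greater than L̃; in particular, every feasible walk from s to t visiting st is strictly longer than the known feasible walk. -/

import Mathlib

open scoped ENNReal

/-- The sum of `f` over consecutive pairs of a list. -/
def pairSum {V : Type*} (f : V → V → ℝ) : List V → ℝ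
  | [] => 0
  | [_] => 0
  | a :: b :: rest => f a b + pairSum f (b :: rest)

/-- `p` is a walk from `x` to `y` along the neighbor relation `N`. -/
def IsWalk {V : Type*} (N : V → V → Prop) (x y : V) (p : List V) : Prop :=
  p ≠ [] ∧ p.head? = some x ∧ p.getLast? = some y ∧ p.Chain' N

/-- `minLen N l x y` is the infimum of total length over all walks from `x`
to `y` (`∞` if none exists). -/
noncomputable def minLen {S : Type*} (N : S → S → Prop) (l : S → S → ℝ)
    (x y : S) : ℝ≥0∞ :=
  sInf {c : ℝ≥0∞ | ∃ p : List S, IsWalk N x y p ∧ c = ENNReal.ofReal (pairSum l p)}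

lemma pairSum_split {V : Type*} (f : V → V → ℝ) (x : V) (ys : List V) :
    ∀ xs : List V, pairSum f (xs ++ x :: ys) = pairSum f (xs ++ [x]) + pairSum f (x :: ys)
  | [] => by simp [pairSum]
  | [a] => by simp [pairSum]
  | a :: b :: xs => by
      have h := pairSum_split f x ys (b :: xs)
      show f a b + pairSum f ((b :: xs) ++ x :: ys) =
        f a b + pairSum f ((b :: xs) ++ [x]) + pairSum f (x :: ys)
      rw [h]; ring

lemma pairSum_nonneg {V : Type*} {f : V → V → ℝ} {N : V → V → Prop}
    (hf : ∀ a b, N a b → 0 ≤ f a b) :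
    ∀ p : List V, p.Chain' N → 0 ≤ pairSum f p
  | [] => fun _ => le_refl 0
  | [_] => fun _ => le_refl 0
  | a :: b :: rest => fun h => by
      rw [List.Chain', List.isChain_cons_cons] at h
      have := pairSum_nonneg hf (b :: rest) h.2
      have := hf a b h.1
      simp only [pairSum]
      linarith

/-- Soundness of Suboptimal Loco-State Pruning (SLSP) in DEWN: if a feasible
walk from `s` to `t` of length `L` exists and
`minLen s st + minLen st t > L`, then every walk from `s` to `t` visiting `st`
is strictly longer than `L`; in particular every feasible such walk is
strictly longer than the known feasible walk. -/
theorem stmt_7 {S : Type*} [Fintype S] [Nonempty S]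
    (N : S → S → Prop) (hsymm : ∀ a b : S, N a b → N b a)
    (l MIL : S → S → ℝ)
    (hl : ∀ a b : S, N a b → 0 < l a b) (hMIL : ∀ a b : S, N a b → 0 ≤ MIL a b)
    (s t : S) (C : ℝ) (hC : 0 ≤ C) (L : ℝ)
    (hfeas : ∃ p : List S, IsWalk N s t p ∧ pairSum MIL p ≤ C ∧ pairSum l p = L)
    (st : S)
    (hst : ENNReal.ofReal L < minLen N l s st + minLen N l st t) :
    (∀ p : List S, IsWalk N s t p → st ∈ p → L < pairSum l p) ∧
    (∀ p : List S, IsWalk N s t p → pairSum MIL p ≤ C → st ∈ p →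
      L < pairSum l p) := by
  have key : ∀ p : List S, IsWalk N s t p → st ∈ p → L < pairSum l p := by
    intro p hw hmem
    obtain ⟨p₁, p₂, rfl⟩ := List.append_of_mem hmem
    obtain ⟨hne, hhead, hlast, hchain⟩ := hw
    -- split chain
    have hchain1 : (p₁ ++ [st]).Chain' N := by
      have : ((p₁ ++ [st]) ++ p₂).Chain' N := by simpa using hchain
      exact (List.isChain_append.mp this).1
    have hchain2 : (st :: p₂).Chain' N := (List.isChain_append.mp hchain).2.1
    have hw1 : IsWalk N s st (p₁ ++ [st]) := by
      refine ⟨by simp, ?_, by simp, hchain1⟩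
      rcases p₁ with _ | ⟨a, p₁⟩
      · simpa using hhead
      · simpa using hhead
    have hw2 : IsWalk N st t (st :: p₂) := by
      refine ⟨by simp, by simp, ?_, hchain2⟩
      rw [← hlast, List.getLast?_append]
      have h2 : (st :: p₂).getLast? = some ((st :: p₂).getLast (by simp)) :=
        List.getLast?_eq_getLast _
      rw [h2]; rfl
    have hle1 : minLen N l s st ≤ ENNReal.ofReal (pairSum l (p₁ ++ [st])) :=
      sInf_le ⟨p₁ ++ [st], hw1, rfl⟩
    have hle2 : minLen N l st t ≤ ENNReal.ofReal (pairSum l (st :: p₂)) :=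
      sInf_le ⟨st :: p₂, hw2, rfl⟩
    have hnn1 : 0 ≤ pairSum l (p₁ ++ [st]) :=
      pairSum_nonneg (fun a b h => (hl a b h).le) _ hchain1
    have hnn2 : 0 ≤ pairSum l (st :: p₂) :=
      pairSum_nonneg (fun a b h => (hl a b h).le) _ hchain2
    have hsplit := pairSum_split l st p₂ p₁
    by_contra hcon
    push_neg at hcon
    have : ENNReal.ofReal (pairSum l (p₁ ++ st :: p₂)) ≤ ENNReal.ofReal L :=
      ENNReal.ofReal_le_ofReal hcon
    have hlt : ENNReal.ofReal L < ENNReal.ofReal (pairSum l (p₁ ++ st :: p₂)) := by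
      calc ENNReal.ofReal L < minLen N l s st + minLen N l st t := hst
        _ ≤ ENNReal.ofReal (pairSum l (p₁ ++ [st])) + ENNReal.ofReal (pairSum l (st :: p₂)) :=
            add_le_add hle1 hle2
        _ = ENNReal.ofReal (pairSum l (p₁ ++ st :: p₂)) := by
            rw [← ENNReal.ofReal_add hnn1 hnn2, hsplit]
    exact absurd this (not_le.mpr hlt)
  exact ⟨key, fun p hw _ hmem => key p hw hmem⟩
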